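/- arXiv:1601.01374 — 3 statements merged into one kernel-verified Lean document; each statement's English description precedes it below -/
import Mathlib

section
/- For a single nonnegative real ω ≥ 0, ∫₀^∞ t^(−3/2) (1 − e^(−ω² t)) dt = 2√π · ω. -/
/-!
Integrating by parts against `d(-t^(-s)/s)` turns `∫₀^∞ t^(-s-1) (1 - e^(-a t)) dt` into
`(a/s) ∫₀^∞ t^(-s) e^(-a t) dt = a^s Γ(1 - s) / s`; the boundary terms vanish for `0 < s < 1`
because `0 ≤ 1 - e^(-a t) ≤ min 1 (a t)`. At `s = 1/2`, `a = ω²` this is `2 √π ω`,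
since `Γ(1/2) = √π`.
-/

open MeasureTheory Real Set Filter Topology

lemma abs_one_sub_exp_neg_le_self {x : ℝ} (hx : 0 ≤ x) : |1 - exp (-x)| ≤ x := by
  rw [abs_of_nonneg (sub_nonneg.2 (exp_le_one_iff.2 (neg_nonpos.2 hx)))]
  linarith [one_sub_le_exp_neg x]

lemma abs_one_sub_exp_neg_le_one {x : ℝ} (hx : 0 ≤ x) : |1 - exp (-x)| ≤ 1 := by
  rw [abs_of_nonneg (sub_nonneg.2 (exp_le_one_iff.2 (neg_nonpos.2 hx)))]
  linarith [exp_pos (-x)]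

section

variable {a r t : ℝ}

lemma norm_rpow_mul_one_sub_exp_neg_mul_le_mul (ha : 0 ≤ a) (ht : 0 < t) :
    ‖t ^ r * (1 - exp (-a * t))‖ ≤ a * t ^ (r + 1) := by
  rw [norm_mul, norm_of_nonneg (rpow_pos_of_pos ht r).le, norm_eq_abs, neg_mul,
    rpow_add_one ht.ne', mul_left_comm]
  exact mul_le_mul_of_nonneg_left (abs_one_sub_exp_neg_le_self (by positivity))
    (rpow_pos_of_pos ht r).le

lemma norm_rpow_mul_one_sub_exp_neg_mul_le (ha : 0 ≤ a) (ht : 0 < t) :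
    ‖t ^ r * (1 - exp (-a * t))‖ ≤ t ^ r := by
  rw [norm_mul, norm_of_nonneg (rpow_pos_of_pos ht r).le, norm_eq_abs, neg_mul]
  exact mul_le_of_le_one_right (rpow_pos_of_pos ht r).le
    (abs_one_sub_exp_neg_le_one (by positivity))

lemma tendsto_rpow_mul_one_sub_exp_neg_mul_nhdsGT_zero (ha : 0 ≤ a) (hr : -1 < r) :
    Tendsto (fun t ↦ t ^ r * (1 - exp (-a * t))) (𝓝[>] 0) (𝓝 0) := by
  have hbound : Tendsto (fun t : ℝ ↦ a * t ^ (r + 1)) (𝓝[>] 0) (𝓝 0) := by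
    have := (continuousAt_rpow_const 0 (r + 1) (Or.inr (by linarith))).tendsto
    rw [zero_rpow (by linarith)] at this
    simpa using (this.const_mul a).mono_left nhdsWithin_le_nhds
  refine squeeze_zero_norm' ?_ hbound
  filter_upwards [self_mem_nhdsWithin] with t ht
  exact norm_rpow_mul_one_sub_exp_neg_mul_le_mul ha ht

lemma tendsto_rpow_mul_one_sub_exp_neg_mul_atTop (ha : 0 ≤ a) (hr : r < 0) :
    Tendsto (fun t ↦ t ^ r * (1 - exp (-a * t))) atTop (𝓝 0) := by
  have hbound : Tendsto (fun t : ℝ ↦ t ^ r) atTop (𝓝 0) := by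
    simpa using tendsto_rpow_neg_atTop (neg_pos.2 hr)
  refine squeeze_zero_norm' ?_ hbound
  filter_upwards [eventually_gt_atTop 0] with t ht
  exact norm_rpow_mul_one_sub_exp_neg_mul_le ha ht

lemma integrableOn_rpow_mul_one_sub_exp_neg_mul (ha : 0 ≤ a) (hr₁ : -2 < r) (hr₂ : r < -1) :
    IntegrableOn (fun t ↦ t ^ r * (1 - exp (-a * t))) (Ioi 0) := by
  have hmeas : AEStronglyMeasurable (fun t ↦ t ^ r * (1 - exp (-a * t)))
      (volume.restrict (Ioi 0)) :=
    ((continuousOn_id.rpow_const fun t ht ↦ Or.inl (ne_of_gt ht)).mul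
      (by fun_prop)).aestronglyMeasurable measurableSet_Ioi
  rw [← Ioc_union_Ioi_eq_Ioi zero_le_one, integrableOn_union]
  constructor
  · have hdom : IntegrableOn (fun t : ℝ ↦ a * t ^ (r + 1)) (Ioc 0 1) :=
      ((intervalIntegral.intervalIntegrable_rpow' (by linarith)).1).const_mul a
    refine hdom.mono' (hmeas.mono_set Ioc_subset_Ioi_self) ?_
    filter_upwards [ae_restrict_mem measurableSet_Ioc] with t ht
    exact norm_rpow_mul_one_sub_exp_neg_mul_le_mul ha ht.1
  · refine (integrableOn_Ioi_rpow_of_lt hr₂ one_pos).mono'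
      (hmeas.mono_set (Ioi_subset_Ioi zero_le_one)) ?_
    filter_upwards [ae_restrict_mem measurableSet_Ioi] with t ht
    exact norm_rpow_mul_one_sub_exp_neg_mul_le ha (one_pos.trans ht)

end

lemma integral_rpow_neg_mul_exp_neg_mul {a s : ℝ} (ha : 0 < a) (hs : s < 1) :
    ∫ t in Ioi 0, t ^ (-s) * exp (-a * t) = a ^ s / a * Gamma (1 - s) := by
  have h := integral_rpow_mul_exp_neg_mul_Ioi (a := 1 - s) (by linarith) ha
  rw [one_div, inv_rpow ha.le, ← rpow_neg ha.le, neg_sub, rpow_sub_one ha.ne'] at h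
  simpa using h

theorem integral_rpow_mul_one_sub_exp_neg_mul {a s : ℝ} (ha : 0 ≤ a) (hs₀ : 0 < s)
    (hs₁ : s < 1) :
    ∫ t in Ioi 0, t ^ (-s - 1) * (1 - exp (-a * t)) = a ^ s * Gamma (1 - s) / s := by
  rcases ha.eq_or_lt with rfl | ha
  · simp [zero_rpow hs₀.ne']
  set u : ℝ → ℝ := fun t ↦ -s⁻¹ * t ^ (-s)
  set v : ℝ → ℝ := fun t ↦ 1 - exp (-a * t)
  have hu (t : ℝ) (ht : t ∈ Ioi 0) : HasDerivAt u (t ^ (-s - 1)) t :=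
    ((hasDerivAt_rpow_const (Or.inl (ne_of_gt ht))).const_mul (-s⁻¹)).congr_deriv
      (by field_simp)
  have hv (t : ℝ) (_ : t ∈ Ioi 0) : HasDerivAt v (a * exp (-a * t)) t :=
    (((hasDerivAt_id' t).const_mul (-a)).exp.const_sub 1).congr_deriv (by ring)
  have huv' : IntegrableOn (u * fun t ↦ a * exp (-a * t)) (Ioi 0) := by
    have := integrableOn_rpow_mul_exp_neg_mul_rpow (s := -s) (p := 1) (by linarith) one_pos ha
    refine IntegrableOn.congr_fun (this.const_mul (-s⁻¹ * a)) (fun t _ ↦ ?_) measurableSet_Ioi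
    simp only [u, Pi.mul_apply, rpow_one]
    ring
  have h_zero : Tendsto (u * v) (𝓝[>] 0) (𝓝 0) := by
    have := tendsto_rpow_mul_one_sub_exp_neg_mul_nhdsGT_zero ha.le (r := -s) (by linarith)
    simpa only [u, v, Pi.mul_def, mul_zero, mul_assoc] using this.const_mul (-s⁻¹)
  have h_top : Tendsto (u * v) atTop (𝓝 0) := by
    have := tendsto_rpow_mul_one_sub_exp_neg_mul_atTop ha.le (r := -s) (by linarith)
    simpa only [u, v, Pi.mul_def, mul_zero, mul_assoc] using this.const_mul (-s⁻¹)
  have hibp := integral_Ioi_mul_deriv_eq_deriv_mul hu hv huv'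
    (integrableOn_rpow_mul_one_sub_exp_neg_mul ha.le (by linarith) (by linarith)) h_zero h_top
  have hlhs : ∫ t in Ioi 0, u t * (a * exp (-a * t))
      = -s⁻¹ * a * ∫ t in Ioi 0, t ^ (-s) * exp (-a * t) := by
    rw [← integral_const_mul]
    refine integral_congr_ae (Eventually.of_forall fun t ↦ ?_)
    simp only [u]
    ring
  calc ∫ t in Ioi 0, t ^ (-s - 1) * (1 - exp (-a * t))
      = -∫ t in Ioi 0, u t * (a * exp (-a * t)) := by rw [hibp]; ring
    _ = s⁻¹ * a * (a ^ s / a * Gamma (1 - s)) := by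
      rw [hlhs, integral_rpow_neg_mul_exp_neg_mul ha hs₁]; ring
    _ = a ^ s * Gamma (1 - s) / s := by field_simp

theorem gaussian_frequency_integral (ω : ℝ) (hω : 0 ≤ ω) :
    ∫ t in Set.Ioi (0 : ℝ), t ^ (-(3/2) : ℝ) * (1 - Real.exp (-ω ^ 2 * t))
      = 2 * Real.sqrt π * ω := by
  have h := integral_rpow_mul_one_sub_exp_neg_mul (sq_nonneg ω) one_half_pos one_half_lt_one
  rw [show -(1 / 2) - 1 = (-(3 / 2) : ℝ) by norm_num, show (1 : ℝ) - 1 / 2 = 1 / 2 by norm_num,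
    ← sqrt_eq_rpow, sqrt_sq hω, Gamma_one_half_eq] at h
  rw [h]
  ring
end

section
/- For all ω > 0 and Ω > 0, ω · erfc(ω/Ω) = (Ω/√π) e^(−ω²/Ω²) − (1/√(4π)) ∫_{Ω^{−2}}^∞ t^(−3/2) e^(−ω² t) dt. -/
/-!
The integrand `t ^ (-3/2) * exp (-a² t)` has on `(0, ∞)` the explicit antiderivative
`F t = -2 exp (-a² t) / √t + 2 √π a erfc (a √t)`: differentiating the first term produces the
integrand plus `2 a² exp (-a² t) / √t`, which the chain rule for `erfc (a √t)` cancels.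
For `a ≥ 0` both terms of `F` vanish at infinity, so the improper integral over `(c, ∞)` is
`-F c`; with `a = ω` and `c = Ω⁻²` this is the identity.
-/

open MeasureTheory Real Set
open Filter Topology

/-- The complementary error function `erfc x = (2/√π) ∫_x^∞ e^{-t²} dt`. -/
noncomputable def erfc (x : ℝ) : ℝ :=
  (2 / Real.sqrt π) * ∫ t in Set.Ioi x, Real.exp (-t ^ 2)

theorem hasDerivAt_integral_Ioi {E : Type*} [NormedAddCommGroup E] [NormedSpace ℝ E]
    [CompleteSpace E] {f : ℝ → E} (hf : Integrable f) (hcont : Continuous f) (x : ℝ) :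
    HasDerivAt (fun y => ∫ s in Ioi y, f s) (-f x) x := by
  have htail :
      (fun y => ∫ s in Ioi y, f s) = fun y => (∫ s in Ioi 0, f s) - ∫ s in 0..y, f s := by
    ext y
    rw [eq_sub_iff_add_eq', intervalIntegral.integral_interval_add_Ioi hf.integrableOn
      hf.integrableOn]
  rw [htail, ← zero_sub]
  exact (hasDerivAt_const x _).sub <| intervalIntegral.integral_hasDerivAt_right
    hf.intervalIntegrable hcont.stronglyMeasurable.stronglyMeasurableAtFilter hcont.continuousAt

theorem hasDerivAt_erfc (x : ℝ) : HasDerivAt erfc (-(2 / √π) * exp (-x ^ 2)) x := by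
  have hgauss : Integrable fun s : ℝ => exp (-s ^ 2) := by
    simpa using integrable_exp_neg_mul_sq one_pos
  rw [neg_mul, ← mul_neg]
  exact (hasDerivAt_integral_Ioi hgauss (by fun_prop) x).const_mul _

theorem tendsto_erfc_atTop : Tendsto erfc atTop (𝓝 0) := by
  have h := (tendsto_integral_Ioi_zero (μ := volume) (f := fun s => exp (-s ^ 2))
    tendsto_id).const_mul (2 / √π)
  rwa [mul_zero] at h

theorem hasDerivAt_inv_sqrt_mul_exp_add_erfc (a : ℝ) {t : ℝ} (ht : 0 < t) :
    HasDerivAt (fun t => -2 * (√t)⁻¹ * exp (-a ^ 2 * t) + 2 * √π * a * erfc (a * √t))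
      (t ^ (-(3 / 2) : ℝ) * exp (-a ^ 2 * t)) t := by
  have hsqrt : 0 < √t := sqrt_pos.mpr ht
  have hpow : t ^ (-(3 / 2) : ℝ) = (√t)⁻¹ / t := by
    rw [show (-(3 / 2) : ℝ) = -(1 / 2) - 1 by norm_num, rpow_sub_one ht.ne', rpow_neg ht.le,
      sqrt_eq_rpow]
  have hd_sqrt := hasDerivAt_sqrt ht.ne'
  have hd_exp : HasDerivAt (fun t => exp (-a ^ 2 * t)) (exp (-a ^ 2 * t) * (-a ^ 2)) t := by
    simpa using ((hasDerivAt_id t).const_mul (-a ^ 2)).exp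
  have hd_erfc := (hasDerivAt_erfc (a * √t)).comp t (hd_sqrt.const_mul a)
  refine (((hd_sqrt.inv hsqrt.ne').const_mul (-2)).mul hd_exp |>.add
    (hd_erfc.const_mul (2 * √π * a))).congr_deriv ?_
  rw [hpow, mul_pow, sq_sqrt ht.le, Pi.inv_apply]
  field_simp
  ring

theorem tendsto_inv_sqrt_mul_exp_add_erfc_atTop {a : ℝ} (ha : 0 ≤ a) :
    Tendsto (fun t => -2 * (√t)⁻¹ * exp (-a ^ 2 * t) + 2 * √π * a * erfc (a * √t))
      atTop (𝓝 0) := by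
  have hinv_sqrt : Tendsto (fun t : ℝ => (√t)⁻¹) atTop (𝓝 0) :=
    tendsto_inv_atTop_zero.comp tendsto_sqrt_atTop
  rcases ha.eq_or_lt with rfl | ha
  · simpa using hinv_sqrt.const_mul (-2)
  have hexp : Tendsto (fun t => exp (-a ^ 2 * t)) atTop (𝓝 0) :=
    tendsto_exp_atBot.comp <| tendsto_id.const_mul_atTop_of_neg (by nlinarith)
  have herfc : Tendsto (fun t => erfc (a * √t)) atTop (𝓝 0) :=
    tendsto_erfc_atTop.comp <| tendsto_sqrt_atTop.const_mul_atTop ha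
  simpa using ((hinv_sqrt.const_mul (-2)).mul hexp).add (herfc.const_mul (2 * √π * a))

theorem integral_Ioi_rpow_neg_three_halves_mul_exp {a c : ℝ} (ha : 0 ≤ a) (hc : 0 < c) :
    ∫ t in Ioi c, t ^ (-(3 / 2) : ℝ) * exp (-a ^ 2 * t)
      = 2 * (√c)⁻¹ * exp (-a ^ 2 * c) - 2 * √π * a * erfc (a * √c) := by
  rw [integral_Ioi_of_hasDerivAt_of_nonneg'
    (fun t ht => hasDerivAt_inv_sqrt_mul_exp_add_erfc a (hc.trans_le ht))
    (fun t ht => mul_nonneg (rpow_nonneg (hc.trans ht).le _) (exp_pos _).le)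
    (tendsto_inv_sqrt_mul_exp_add_erfc_atTop ha)]
  ring

theorem erfc_regularized_single_mode (ω Ω : ℝ) (hω : 0 < ω) (hΩ : 0 < Ω) :
    ω * erfc (ω / Ω)
      = (Ω / Real.sqrt π) * Real.exp (-ω ^ 2 / Ω ^ 2)
        - (1 / Real.sqrt (4 * π)) *
            ∫ t in Set.Ioi ((Ω ^ 2)⁻¹), t ^ (-(3/2) : ℝ) * Real.exp (-ω ^ 2 * t) := by
  have hsqrt_c : √((Ω ^ 2)⁻¹) = Ω⁻¹ := by rw [sqrt_inv, sqrt_sq hΩ.le]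
  have hsqrt_4π : √(4 * π) = 2 * √π := by
    rw [sqrt_mul zero_le_four, show (4 : ℝ) = 2 ^ 2 by norm_num, sqrt_sq zero_le_two]
  rw [integral_Ioi_rpow_neg_three_halves_mul_exp hω.le (by positivity), hsqrt_c, hsqrt_4π]
  field_simp
  ring
end

section
/- Post's inversion formula: let g : (0,∞) → ℝ be continuous and bounded, and let G(s) = ∫₀^∞ e^{−st} g(t) dt be its Laplace transform. Then for every z > 0, g(z) = lim_{n→∞} ((−1)^n / n!) (n/z)^{n+1} G^{(n)}(n/z), where G^{(n)} denotes the n-th derivative of G. -/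
/-!
The `n`-th derivative of the Laplace transform is `G⁽ⁿ⁾(s) = (-1)ⁿ ∫₀^∞ tⁿ e^{-st} g(t) dt`
(differentiation under the integral sign, `g` being bounded), so the expression in the limit is
`∫₀^∞ Kₙ(t) g(t) dt`, where `Kₙ` is the density of the Gamma law of shape `n + 1` and rate `n / z`.
These are probability densities whose second moment about `z` is `z² (n + 2) / n² → 0`, so by a
Chebyshev-type estimate they concentrate at `z`, and `∫ Kₙ g → g z` for `g` bounded and continuous
at `z`.
-/

open MeasureTheory Real Set Filter
open scoped Topology Nat

theorem tendsto_setIntegral_mul_of_tendsto_sq_moment {ι : Type*} {l : Filter ι} {μ : Measure ℝ}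
    {s : Set ℝ} {K : ι → ℝ → ℝ} {g : ℝ → ℝ} {z M : ℝ} (hs : MeasurableSet s) (hz : z ∈ s)
    (hK : ∀ᶠ i in l, (∀ t ∈ s, 0 ≤ K i t) ∧ IntegrableOn (K i) s μ ∧
      IntegrableOn (fun t ↦ K i t * (t - z) ^ 2) s μ ∧ ∫ t in s, K i t ∂μ = 1)
    (hK_sq : Tendsto (fun i ↦ ∫ t in s, K i t * (t - z) ^ 2 ∂μ) l (𝓝 0))
    (hg_meas : AEStronglyMeasurable g (μ.restrict s)) (hg_bdd : ∀ t ∈ s, |g t| ≤ M)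
    (hgz : ContinuousWithinAt g s z) :
    Tendsto (fun i ↦ ∫ t in s, K i t * g t ∂μ) l (𝓝 (g z)) := by
  have hM : 0 ≤ M := (abs_nonneg _).trans (hg_bdd z hz)
  rw [Metric.tendsto_nhds]
  intro ε hε
  obtain ⟨δ, hδ, hgδ⟩ := Metric.continuousWithinAt_iff.1 hgz (ε / 2) (half_pos hε)
  set c := 2 * M / δ ^ 2
  -- Off the `δ`-window, `|g t - g z| ≤ 2 M` is absorbed by `(t - z) ^ 2 / δ ^ 2 ≥ 1`.
  have hpt : ∀ t ∈ s, |g t - g z| ≤ ε / 2 + c * (t - z) ^ 2 := by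
    intro t ht
    by_cases hnear : dist t z < δ
    · have := (hgδ ht hnear).le
      rw [dist_eq] at this
      nlinarith [sq_nonneg (t - z), show 0 ≤ c by positivity]
    · have hfar : δ ^ 2 ≤ (t - z) ^ 2 := by
        rw [not_lt, dist_eq] at hnear
        nlinarith [abs_nonneg (t - z), sq_abs (t - z)]
      have h2M : 2 * M ≤ c * (t - z) ^ 2 := by
        rw [div_mul_eq_mul_div, le_div_iff₀ (by positivity)]
        exact mul_le_mul_of_nonneg_left hfar (by positivity)
      have := abs_sub (g t) (g z)
      linarith [hg_bdd t ht, hg_bdd z hz]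
  have hsmall : ∀ᶠ i in l, c * ∫ t in s, K i t * (t - z) ^ 2 ∂μ < ε / 2 :=
    (mul_zero c ▸ hK_sq.const_mul c).eventually (gt_mem_nhds (half_pos hε))
  filter_upwards [hK, hsmall] with i ⟨hK0, hKi, hKsq, hK1⟩ hi
  have hKg : IntegrableOn (fun t ↦ K i t * g t) s μ :=
    hKi.mul_bdd hg_meas ((ae_restrict_iff' hs).2 (.of_forall hg_bdd))
  have hdom : IntegrableOn (fun t ↦ ε / 2 * K i t + c * (K i t * (t - z) ^ 2)) s μ :=
    (hKi.const_mul _).add (hKsq.const_mul _)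
  calc dist (∫ t in s, K i t * g t ∂μ) (g z)
      = ‖∫ t in s, K i t * (g t - g z) ∂μ‖ := by
        simp only [mul_sub, integral_sub hKg (hKi.mul_const _), integral_mul_const, hK1, one_mul,
          dist_eq, norm_eq_abs]
    _ ≤ ∫ t in s, ε / 2 * K i t + c * (K i t * (t - z) ^ 2) ∂μ := by
        refine norm_integral_le_of_norm_le hdom ((ae_restrict_iff' hs).2 (.of_forall ?_))
        intro t ht
        rw [norm_mul, norm_eq_abs, abs_of_nonneg (hK0 t ht)]
        calc K i t * |g t - g z| ≤ K i t * (ε / 2 + c * (t - z) ^ 2) :=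
              mul_le_mul_of_nonneg_left (hpt t ht) (hK0 t ht)
          _ = _ := by ring
    _ = ε / 2 + c * ∫ t in s, K i t * (t - z) ^ 2 ∂μ := by
        rw [integral_add (hKi.const_mul _) (hKsq.const_mul _), integral_const_mul,
          integral_const_mul, hK1, mul_one]
    _ < ε := by linarith

theorem integrableOn_pow_mul_exp_neg_mul (k : ℕ) {s : ℝ} (hs : 0 < s) :
    IntegrableOn (fun t ↦ t ^ k * exp (-(s * t))) (Ioi 0) := by
  simpa [rpow_natCast] using
    integrableOn_rpow_mul_exp_neg_mul_rpow (p := 1) (s := k) (by linarith [k.cast_nonneg (α := ℝ)])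
      one_pos hs

theorem integral_pow_mul_exp_neg_mul (k : ℕ) {s : ℝ} (hs : 0 < s) :
    ∫ t in Ioi 0, t ^ k * exp (-(s * t)) = k ! / s ^ (k + 1) := by
  have h := integral_rpow_mul_exp_neg_mul_Ioi (a := k + 1) (by positivity) hs
  rw [add_sub_cancel_right, Gamma_nat_eq_factorial, ← Nat.cast_succ, rpow_natCast] at h
  simpa [rpow_natCast, div_eq_inv_mul] using h

noncomputable def gammaKernel (n : ℕ) (s t : ℝ) : ℝ := s ^ (n + 1) / n ! * (t ^ n * exp (-(s * t)))

theorem gammaKernel_nonneg (n : ℕ) {s t : ℝ} (hs : 0 ≤ s) (ht : 0 ≤ t) : 0 ≤ gammaKernel n s t := by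
  unfold gammaKernel
  positivity

theorem integrableOn_gammaKernel_mul_pow (n k : ℕ) {s : ℝ} (hs : 0 < s) :
    IntegrableOn (fun t ↦ gammaKernel n s t * t ^ k) (Ioi 0) := by
  refine IntegrableOn.congr_fun ((integrableOn_pow_mul_exp_neg_mul (n + k) hs).const_mul
    (s ^ (n + 1) / n !)) (fun t _ ↦ ?_) measurableSet_Ioi
  simp only [gammaKernel]
  ring

theorem integral_gammaKernel_mul_pow (n k : ℕ) {s : ℝ} (hs : 0 < s) :
    ∫ t in Ioi 0, gammaKernel n s t * t ^ k = (n + k)! / (n ! * s ^ k) := by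
  have : ∀ t, gammaKernel n s t * t ^ k = s ^ (n + 1) / n ! * (t ^ (n + k) * exp (-(s * t))) :=
    fun t ↦ by simp only [gammaKernel]; ring
  simp only [this, integral_const_mul, integral_pow_mul_exp_neg_mul _ hs]
  field_simp
  ring

theorem integrableOn_gammaKernel_mul_sq_sub (n : ℕ) {s : ℝ} (hs : 0 < s) (z : ℝ) :
    IntegrableOn (fun t ↦ gammaKernel n s t * (t - z) ^ 2) (Ioi 0) := by
  have hK k := integrableOn_gammaKernel_mul_pow n k hs
  refine IntegrableOn.congr_fun (((hK 2).sub ((hK 1).const_mul (2 * z))).add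
    ((hK 0).const_mul (z ^ 2))) (fun t _ ↦ ?_) measurableSet_Ioi
  simp only [Pi.add_apply, Pi.sub_apply]
  ring

theorem integral_gammaKernel_mul_sq_sub (n : ℕ) {s : ℝ} (hs : 0 < s) (z : ℝ) :
    ∫ t in Ioi 0, gammaKernel n s t * (t - z) ^ 2 =
      (n + 1) * (n + 2) / s ^ 2 - 2 * z * (n + 1) / s + z ^ 2 := by
  have hK := integrableOn_gammaKernel_mul_pow n
  have : ∀ t, gammaKernel n s t * (t - z) ^ 2 = gammaKernel n s t * t ^ 2
      - 2 * z * (gammaKernel n s t * t ^ 1) + z ^ 2 * (gammaKernel n s t * t ^ 0) :=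
    fun t ↦ by ring
  simp only [this]
  rw [integral_add, integral_sub, integral_const_mul, integral_const_mul,
    integral_gammaKernel_mul_pow _ _ hs, integral_gammaKernel_mul_pow _ _ hs,
    integral_gammaKernel_mul_pow _ _ hs]
  · simp only [Nat.factorial_succ, add_zero, Nat.cast_mul, Nat.cast_succ]
    field_simp
    ring
  · exact hK 2 hs
  · exact (hK 1 hs).const_mul _
  · exact (hK 2 hs).sub ((hK 1 hs).const_mul _)
  · exact (hK 0 hs).const_mul _

theorem tendsto_integral_gammaKernel_mul_sq_sub {z : ℝ} (hz : 0 < z) :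
    Tendsto (fun n : ℕ ↦ ∫ t in Ioi 0, gammaKernel n (n / z) t * (t - z) ^ 2) atTop (𝓝 0) := by
  have h : Tendsto (fun n : ℕ ↦ z ^ 2 * ((1 : ℝ) / n + 2 * ((1 : ℝ) / n) ^ 2)) atTop (𝓝 0) := by
    simpa using (tendsto_one_div_atTop_nhds_zero_nat.add
      ((tendsto_one_div_atTop_nhds_zero_nat.pow 2).const_mul 2)).const_mul (z ^ 2)
  refine h.congr' ?_
  filter_upwards [eventually_gt_atTop 0] with n hn
  have hn' : (0 : ℝ) < n := by exact_mod_cast hn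
  rw [integral_gammaKernel_mul_sq_sub n (by positivity)]
  field_simp
  ring

section LaplaceTransform

variable {g : ℝ → ℝ} {M : ℝ}

theorem integrableOn_pow_mul_exp_neg_mul_mul
    (hg_meas : AEStronglyMeasurable g (volume.restrict (Ioi 0)))
    (hg_bdd : ∀ t, 0 < t → |g t| ≤ M) (n : ℕ) {s : ℝ} (hs : 0 < s) :
    IntegrableOn (fun t ↦ t ^ n * exp (-(s * t)) * g t) (Ioi 0) :=
  (integrableOn_pow_mul_exp_neg_mul n hs).mul_bdd hg_meas
    ((ae_restrict_iff' measurableSet_Ioi).2 (.of_forall hg_bdd))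

theorem hasDerivAt_integral_pow_mul_exp_neg_mul_mul
    (hg_meas : AEStronglyMeasurable g (volume.restrict (Ioi 0)))
    (hg_bdd : ∀ t, 0 < t → |g t| ≤ M) (n : ℕ) {s : ℝ} (hs : 0 < s) :
    HasDerivAt (fun x ↦ ∫ t in Ioi 0, t ^ n * exp (-(x * t)) * g t)
      (-∫ t in Ioi 0, t ^ (n + 1) * exp (-(s * t)) * g t) s := by
  have hmeas : ∀ (k : ℕ) (x : ℝ),
      AEStronglyMeasurable (fun t ↦ t ^ k * exp (-(x * t)) * g t) (volume.restrict (Ioi 0)) :=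
    fun k x ↦ (by fun_prop : Continuous fun t : ℝ ↦ t ^ k * exp (-(x * t))).aestronglyMeasurable.mul
      hg_meas
  have hderiv := hasDerivAt_integral_of_dominated_loc_of_deriv_le (μ := volume.restrict (Ioi 0))
    (F := fun x t ↦ t ^ n * exp (-(x * t)) * g t)
    (F' := fun x t ↦ -(t ^ (n + 1) * exp (-(x * t)) * g t))
    (bound := fun t ↦ M * (t ^ (n + 1) * exp (-(s / 2 * t))))
    (Metric.ball_mem_nhds s (half_pos hs)) (.of_forall (hmeas n))
    (integrableOn_pow_mul_exp_neg_mul_mul hg_meas hg_bdd n hs) (hmeas (n + 1) s).neg ?_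
    ((integrableOn_pow_mul_exp_neg_mul (n + 1) (half_pos hs)).const_mul M) ?_
  · simpa only [integral_neg] using hderiv.2
  · refine (ae_restrict_iff' measurableSet_Ioi).2 (.of_forall fun t ht x hx ↦ ?_)
    rw [Metric.mem_ball, dist_eq, abs_lt] at hx
    have hexp : exp (-(x * t)) ≤ exp (-(s / 2 * t)) :=
      exp_le_exp.2 (by nlinarith [mem_Ioi.1 ht])
    have hpow : 0 ≤ t ^ (n + 1) := pow_nonneg (le_of_lt ht) _
    rw [norm_neg, norm_mul, norm_mul, norm_of_nonneg hpow, norm_of_nonneg (exp_pos _).le,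
      norm_eq_abs, mul_comm M]
    gcongr
    exact hg_bdd t ht
  · refine .of_forall fun t x _ ↦ ?_
    have hlin : HasDerivAt (fun x ↦ -(x * t)) (-t) x := (hasDerivAt_mul_const t).neg
    exact ((hlin.exp.const_mul (t ^ n)).mul_const (g t)).congr_deriv (by ring)

theorem iteratedDeriv_eq_integral_pow_mul_exp_neg_mul_mul
    (hg_meas : AEStronglyMeasurable g (volume.restrict (Ioi 0)))
    (hg_bdd : ∀ t, 0 < t → |g t| ≤ M) {G : ℝ → ℝ}
    (hG : ∀ s, 0 < s → G s = ∫ t in Ioi 0, exp (-(s * t)) * g t) (n : ℕ) {s : ℝ} (hs : 0 < s) :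
    iteratedDeriv n G s = (-1) ^ n * ∫ t in Ioi 0, t ^ n * exp (-(s * t)) * g t := by
  induction n generalizing s with
  | zero => simpa using hG s hs
  | succ n ih =>
    have hev : iteratedDeriv n G =ᶠ[𝓝 s]
        fun x ↦ (-1) ^ n * ∫ t in Ioi 0, t ^ n * exp (-(x * t)) * g t :=
      eventually_of_mem (Ioi_mem_nhds hs) fun x hx ↦ ih hx
    rw [iteratedDeriv_succ, hev.deriv_eq,
      ((hasDerivAt_integral_pow_mul_exp_neg_mul_mul hg_meas hg_bdd n hs).const_mul _).deriv]
    ring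

end LaplaceTransform

theorem post_laplace_inversion (g : ℝ → ℝ)
    (hg_cont : ContinuousOn g (Set.Ioi 0))
    (hg_bdd : ∃ M : ℝ, ∀ t : ℝ, 0 < t → |g t| ≤ M)
    (G : ℝ → ℝ)
    (hG : ∀ s : ℝ, 0 < s → G s = ∫ t in Set.Ioi (0 : ℝ), Real.exp (-(s * t)) * g t)
    (z : ℝ) (hz : 0 < z) :
    Tendsto
      (fun n : ℕ =>
        ((-1 : ℝ) ^ n / n.factorial) * ((n : ℝ) / z) ^ (n + 1) *
          iteratedDeriv n G ((n : ℝ) / z))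
      atTop (nhds (g z)) := by
  obtain ⟨M, hM⟩ := hg_bdd
  have hg_meas := hg_cont.aestronglyMeasurable (μ := volume) measurableSet_Ioi
  have hkernel : Tendsto (fun n : ℕ ↦ ∫ t in Ioi 0, gammaKernel n (n / z) t * g t) atTop
      (𝓝 (g z)) := by
    refine tendsto_setIntegral_mul_of_tendsto_sq_moment measurableSet_Ioi hz ?_
      (tendsto_integral_gammaKernel_mul_sq_sub hz) hg_meas hM (hg_cont z hz)
    filter_upwards [eventually_gt_atTop 0] with n hn
    have hs : 0 < (n : ℝ) / z := by positivity
    refine ⟨fun t ht ↦ gammaKernel_nonneg n hs.le (le_of_lt ht), ?_,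
      integrableOn_gammaKernel_mul_sq_sub n hs z, ?_⟩
    · simpa using integrableOn_gammaKernel_mul_pow n 0 hs
    · simpa [Nat.factorial_ne_zero] using integral_gammaKernel_mul_pow n 0 hs
  refine hkernel.congr' ?_
  filter_upwards [eventually_gt_atTop 0] with n hn
  set s : ℝ := n / z
  have hK : ∀ t, gammaKernel n s t * g t = s ^ (n + 1) / n ! * (t ^ n * exp (-(s * t)) * g t) :=
    fun t ↦ by simp only [gammaKernel]; ring
  have hsign : ((-1 : ℝ)) ^ n * (-1) ^ n = 1 := by rw [← mul_pow]; norm_num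
  rw [iteratedDeriv_eq_integral_pow_mul_exp_neg_mul_mul hg_meas hM hG n (by positivity)]
  simp only [hK, integral_const_mul]
  linear_combination -(s ^ (n + 1) / n ! * ∫ t in Ioi 0, t ^ n * exp (-(s * t)) * g t) * hsign
end
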